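/- arXiv:1601.06593 — 2 statements merged into one kernel-verified Lean document; each statement's English description precedes it below -/
import Mathlib

section
/- The partial order (ZFSet, ⊆) admits a nontrivial order automorphism: there exists an equivalence π : ZFSet ≃ ZFSet with π ≠ Equiv.refl such that for all u v, π u ⊆ π v ↔ u ⊆ v. -/
noncomputable section
open Classical in

def theta (x : ZFSet) : ZFSet := if x = ∅ then {∅} else if x = ({∅} : ZFSet) then ∅ else x

lemma empty_ne_singleton : (∅ : ZFSet) ≠ ({∅} : ZFSet) := by
  intro h
  have : (∅ : ZFSet) ∈ ({∅} : ZFSet) := ZFSet.mem_singleton.2 rfl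
  rw [← h] at this
  exact ZFSet.notMem_empty _ this

lemma theta_theta (x : ZFSet) : theta (theta x) = x := by
  unfold theta
  by_cases h1 : x = ∅
  · simp [h1, empty_ne_singleton.symm]
  · by_cases h2 : x = ({∅} : ZFSet)
    · simp [h1, h2]
    · simp [h1, h2]

noncomputable instance : ZFSet.Definable₁ theta := Classical.allZFSetDefinable _

def piFun (u : ZFSet) : ZFSet := ZFSet.image theta u

lemma mem_piFun {y u : ZFSet} : y ∈ piFun u ↔ ∃ z ∈ u, theta z = y := by
  simp [piFun, ZFSet.mem_image]

lemma piFun_piFun (u : ZFSet) : piFun (piFun u) = u := by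
  ext y
  simp only [mem_piFun]
  constructor
  · rintro ⟨z, ⟨w, hw, rfl⟩, rfl⟩
    rwa [theta_theta]
  · intro hy
    exact ⟨theta y, ⟨y, hy, rfl⟩, theta_theta y⟩

theorem stmt_7 : ∃ π : ZFSet ≃ ZFSet, π ≠ Equiv.refl ZFSet ∧
    ∀ u v : ZFSet, π u ⊆ π v ↔ u ⊆ v := by
  refine ⟨⟨piFun, piFun, piFun_piFun, piFun_piFun⟩, ?_, ?_⟩
  · intro h
    have h1 : piFun {∅} = {∅} := congrFun (congrArg DFunLike.coe h) {∅}
    have h2 : ({∅} : ZFSet) ∈ piFun ({∅} : ZFSet) := by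
      rw [mem_piFun]
      exact ⟨∅, ZFSet.mem_singleton.2 rfl, by simp [theta]⟩
    rw [h1, ZFSet.mem_singleton] at h2
    exact empty_ne_singleton h2.symm
  · intro u v
    constructor
    · intro h x hx
      have : theta x ∈ piFun u := mem_piFun.2 ⟨x, hx, rfl⟩
      obtain ⟨z, hz, hzx⟩ := mem_piFun.1 (h this)
      have : z = x := by
        have := congrArg theta hzx
        rwa [theta_theta, theta_theta] at this
      rwa [← this]
    · intro h y hy
      obtain ⟨z, hz, rfl⟩ := mem_piFun.1 hy
      exact mem_piFun.2 ⟨z, h hz, rfl⟩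

end
end

section
/- If A and B are computably inseparable computably enumerable subsets of ℕ (disjoint c.e. sets with no computable set C ⊇ A with C ∩ B = ∅), then no computable set separates them; in particular, there exist disjoint c.e. sets A, B such that no computable C satisfies A ⊆ C and C ∩ B = ∅. -/
/-!
Diagonalize against `diag e = φₑ(e)`: let `A = {e | φₑ(e) = 0}` and `B = {e | φₑ(e) = 1}`, which
are c.e. and disjoint. If a computable `C` separated them, the characteristic function of `C` would
have an index `e`, so `φₑ(e) = 1 ↔ e ∈ C`: then `e ∈ C` puts `e` in `B`, while `e ∉ C` puts `e` in
`A ⊆ C`.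
-/

open Nat.Partrec (Code)
open Nat.Partrec.Code

theorem Partrec.mem_re {α σ : Type*} [Primcodable α] [Primcodable σ] [DecidableEq σ]
    {f : α →. σ} (hf : Partrec f) (b : σ) : REPred fun a => b ∈ f a := by
  have hEq : REPred fun m : σ => m = b :=
    ComputablePred.to_re (Primrec.eq.comp Primrec.id (Primrec.const b)).computablePred
  refine (hf.bind (hEq.comp Computable.snd).to₂).dom_re.of_eq fun a => ?_
  simp [Part.dom_iff_mem]

noncomputable def diag (e : ℕ) : Part ℕ :=
  eval (Denumerable.ofNat Code e) e

theorem diag_partrec : Partrec diag :=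
  eval_part.comp (Computable.ofNat _) Computable.id

theorem exists_diag_eq {f : ℕ →. ℕ} (hf : Partrec f) : ∃ e, diag e = f e := by
  obtain ⟨c, hc⟩ := exists_code.1 (Partrec.nat_iff.1 hf)
  exact ⟨Encodable.encode c, by simp [diag, hc]⟩

theorem stmt_16 : ∃ A B : ℕ → Prop, REPred A ∧ REPred B ∧
    (∀ n, ¬ (A n ∧ B n)) ∧
    ∀ C : ℕ → Prop, ComputablePred C →
      ¬ ((∀ n, A n → C n) ∧ (∀ n, C n → ¬ B n)) := by
  refine ⟨fun e => 0 ∈ diag e, fun e => 1 ∈ diag e, diag_partrec.mem_re 0, diag_partrec.mem_re 1,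
    fun n ⟨h0, h1⟩ => absurd (Part.mem_unique h0 h1) zero_ne_one, ?_⟩
  rintro C hC ⟨hAC, hCB⟩
  classical
  have hf : Computable fun n => if C n then 1 else 0 :=
    ComputablePred.ite (Computable.const 1) (Computable.const 0) hC
  obtain ⟨e, he⟩ := exists_diag_eq hf.partrec
  by_cases hCe : C e
  · exact hCB e hCe (by simp [he, hCe])
  · exact hCe (hAC e (by simp [he, hCe]))
end
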